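/- Let D < 0 be an integer with D ≡ 0 or 1 mod 4. Then every positive definite integral binary quadratic form of discriminant D is SL₂(ℤ)-equivalent to exactly one reduced form; that is, each SL₂(ℤ)-orbit of positive definite forms of discriminant D contains a unique reduced form. -/

import Mathlib

/-- An integral binary quadratic form `Q(x,y) = Ax² + Bxy + Cy²`. -/
structure BQF where
  A : ℤ
  B : ℤ
  C : ℤ

/-- Evaluation of a binary quadratic form. -/
def BQF.eval (Q : BQF) (x y : ℤ) : ℤ := Q.A * x ^ 2 + Q.B * x * y + Q.C * y ^ 2

/-- The discriminant `B² − 4AC` of a binary quadratic form. -/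
def BQF.disc (Q : BQF) : ℤ := Q.B ^ 2 - 4 * Q.A * Q.C

/-- A binary quadratic form is positive definite if `A > 0` and its discriminant is negative. -/
def BQF.PosDef (Q : BQF) : Prop := 0 < Q.A ∧ Q.disc < 0

/-- Two forms are `SL₂(ℤ)`-equivalent if one is obtained from the other by the action
`(Q|γ)(x,y) = Q(ax + by, cx + dy)` for some `γ = [[a,b],[c,d]] ∈ SL₂(ℤ)`. -/
def BQF.Equivalent (Q Q' : BQF) : Prop :=
  ∃ γ : Matrix.SpecialLinearGroup (Fin 2) ℤ, ∀ x y : ℤ,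
    Q'.eval x y =
      Q.eval ((γ : Matrix (Fin 2) (Fin 2) ℤ) 0 0 * x + (γ : Matrix (Fin 2) (Fin 2) ℤ) 0 1 * y)
        ((γ : Matrix (Fin 2) (Fin 2) ℤ) 1 0 * x + (γ : Matrix (Fin 2) (Fin 2) ℤ) 1 1 * y)

/-- A positive definite form `Ax² + Bxy + Cy²` is reduced if `|B| ≤ A ≤ C`, and moreover
`B ≥ 0` whenever `|B| = A` or `A = C`. -/
def BQF.Reduced (Q : BQF) : Prop :=
  |Q.B| ≤ Q.A ∧ Q.A ≤ Q.C ∧ ((|Q.B| = Q.A ∨ Q.A = Q.C) → 0 ≤ Q.B)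

/-!
Reduction: translating by `T ^ m` moves `B` into `(-A, A]`, and if then `C < A` the flip `S`
swaps `A` and `C`; since `A > 0` decreases strictly, this terminates in a reduced form.
Uniqueness: a reduced form attains its minimum `A` on nonzero vectors at `(1, 0)`, and any
value at a vector with `y ≠ 0` is at least `C`. So equivalent reduced forms share `A`; if the
connecting matrix is upper triangular, `B` changes by a multiple of `2A`, which the boundary
conditions exclude, and otherwise both forms have `A = C` and `B ≥ 0`, so the common
discriminant fixes `B`.
-/

open scoped MatrixGroups
open ModularGroup

namespace Matrix.SpecialLinearGroup

variable {R : Type*} [CommRing R]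

theorem fin_two_det_eq_one (γ : SL(2, R)) : γ 0 0 * γ 1 1 - γ 0 1 * γ 1 0 = 1 := by
  have h := γ.det_coe
  rwa [Matrix.det_fin_two] at h

theorem fin_two_inv_one_zero (γ : SL(2, R)) : γ⁻¹ 1 0 = -γ 1 0 := by
  simp [SL2_inv_expl]

theorem fin_two_col_zero_ne_zero [Nontrivial R] (γ : SL(2, R)) : (γ 0 0, γ 1 0) ≠ 0 := by
  intro h
  have hdet := fin_two_det_eq_one γ
  simp only [Prod.mk_eq_zero] at h
  simp [h.1, h.2] at hdet

end Matrix.SpecialLinearGroup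

open Matrix.SpecialLinearGroup

theorem Int.exists_add_mul_mem_Ioc {A : ℤ} (hA : 0 < A) (B : ℤ) :
    ∃ m : ℤ, B + 2 * A * m ∈ Set.Ioc (-A) A := by
  have hq := Int.mul_ediv_add_emod (A - B) (2 * A)
  have hr0 := Int.emod_nonneg (A - B) (by positivity : 2 * A ≠ 0)
  have hr1 := Int.emod_lt_of_pos (A - B) (by positivity : 0 < 2 * A)
  exact ⟨(A - B) / (2 * A), by linarith, by linarith⟩

namespace BQF

def act (Q : BQF) (γ : SL(2, ℤ)) : BQF where
  A := Q.eval (γ 0 0) (γ 1 0)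
  B := 2 * Q.A * γ 0 0 * γ 0 1 + Q.B * (γ 0 0 * γ 1 1 + γ 0 1 * γ 1 0) + 2 * Q.C * γ 1 0 * γ 1 1
  C := Q.eval (γ 0 1) (γ 1 1)

theorem ext_of_eval {Q Q' : BQF} (h : ∀ x y, Q.eval x y = Q'.eval x y) : Q = Q' := by
  have h10 := h 1 0
  have h01 := h 0 1
  have h11 := h 1 1
  simp only [eval] at h10 h01 h11
  cases Q; cases Q'
  simp only [mk.injEq]
  refine ⟨?_, ?_, ?_⟩ <;> linarith

theorem eval_act (Q : BQF) (γ : SL(2, ℤ)) (x y : ℤ) :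
    (Q.act γ).eval x y = Q.eval (γ 0 0 * x + γ 0 1 * y) (γ 1 0 * x + γ 1 1 * y) := by
  simp only [act, eval]
  ring

theorem equivalent_iff {Q Q' : BQF} : Q.Equivalent Q' ↔ ∃ γ, Q' = Q.act γ := by
  constructor
  · rintro ⟨γ, h⟩
    exact ⟨γ, ext_of_eval fun x y => (h x y).trans (eval_act Q γ x y).symm⟩
  · rintro ⟨γ, rfl⟩
    exact ⟨γ, eval_act Q γ⟩

theorem act_one (Q : BQF) : Q.act 1 = Q := by
  cases Q
  simp [act, eval]

theorem act_mul (Q : BQF) (γ δ : SL(2, ℤ)) : Q.act (γ * δ) = (Q.act γ).act δ := by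
  refine ext_of_eval fun x y => ?_
  simp only [eval_act, coe_mul, Matrix.mul_apply, Fin.sum_univ_two]
  ring_nf

theorem act_act_inv (Q : BQF) (γ : SL(2, ℤ)) : (Q.act γ).act γ⁻¹ = Q := by
  rw [← act_mul, mul_inv_cancel, act_one]

theorem disc_act (Q : BQF) (γ : SL(2, ℤ)) : (Q.act γ).disc = Q.disc := by
  simp only [disc, act, eval]
  linear_combination
    (γ 0 0 * γ 1 1 - γ 0 1 * γ 1 0 + 1) * (Q.B ^ 2 - 4 * Q.A * Q.C) * fin_two_det_eq_one γ

theorem act_S (Q : BQF) : Q.act S = ⟨Q.C, -Q.B, Q.A⟩ := by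
  simp [act, eval]

theorem act_T_zpow (Q : BQF) (m : ℤ) :
    Q.act (T ^ m) = ⟨Q.A, Q.B + 2 * Q.A * m, Q.eval m 1⟩ := by
  have h := coe_T_zpow m
  simp [act, eval, h, add_comm]

theorem PosDef.eval_pos {Q : BQF} (hQ : Q.PosDef) {x y : ℤ} (hxy : (x, y) ≠ 0) :
    0 < Q.eval x y := by
  obtain ⟨hA, hD⟩ := hQ
  rcases eq_or_ne y 0 with rfl | hy
  · have hx : x ≠ 0 := fun hx => hxy (by simp [hx])
    simpa [eval] using mul_pos hA (pow_pos (abs_pos.2 hx) 2)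
  · have key : 4 * Q.A * Q.eval x y = (2 * Q.A * x + Q.B * y) ^ 2 - Q.disc * y ^ 2 := by
      simp only [eval, disc]
      ring
    have hy2 : 0 < y ^ 2 := by positivity
    nlinarith [sq_nonneg (2 * Q.A * x + Q.B * y), mul_pos (neg_pos.2 hD) hy2]

theorem PosDef.act {Q : BQF} (hQ : Q.PosDef) (γ : SL(2, ℤ)) : (Q.act γ).PosDef :=
  ⟨hQ.eval_pos (fin_two_col_zero_ne_zero γ), (disc_act Q γ).symm ▸ hQ.2⟩

theorem reduced_or_act_S_reduced {Q : BQF} (hB : -Q.A < Q.B) (hBA : Q.B ≤ Q.A)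
    (hAC : Q.A ≤ Q.C) : Q.Reduced ∨ (Q.act S).Reduced := by
  by_cases hflip : Q.B < 0 ∧ Q.A = Q.C
  · right
    rw [act_S]
    refine ⟨?_, hflip.2.ge, fun _ => by linarith [hflip.1]⟩
    rw [abs_neg, abs_of_neg hflip.1]
    linarith
  · left
    refine ⟨abs_le.2 ⟨hB.le, hBA⟩, hAC, ?_⟩
    rintro (h | h)
    · rcases abs_cases Q.B with ⟨hB', -⟩ | ⟨hB', -⟩ <;> linarith
    · by_contra hneg
      exact hflip ⟨not_le.1 hneg, h⟩

theorem PosDef.exists_act_reduced {Q : BQF} (hQ : Q.PosDef) : ∃ γ, (Q.act γ).Reduced := by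
  obtain ⟨m, hm⟩ := Int.exists_add_mul_mem_Ioc hQ.1 Q.B
  have hQT := act_T_zpow Q m
  rcases lt_or_ge (Q.eval m 1) Q.A with hCA | hAC
  · have hpos := (hQ.act (T ^ m * S)).1
    have hdec : (Q.act (T ^ m * S)).A.toNat < Q.A.toNat := by
      rw [act_mul, hQT, act_S] at hpos ⊢
      dsimp only at hpos ⊢
      omega
    obtain ⟨δ, hδ⟩ := PosDef.exists_act_reduced (hQ.act (T ^ m * S))
    exact ⟨T ^ m * S * δ, by rwa [act_mul]⟩
  · rcases reduced_or_act_S_reduced (Q := ⟨Q.A, Q.B + 2 * Q.A * m, Q.eval m 1⟩) hm.1 hm.2 hAC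
      with h | h
    · exact ⟨T ^ m, hQT ▸ h⟩
    · exact ⟨T ^ m * S, by rwa [act_mul, hQT]⟩
termination_by Q.A.toNat

theorem Reduced.C_le_eval {Q : BQF} (hr : Q.Reduced) {x y : ℤ} (hy : y ≠ 0) :
    Q.C ≤ Q.eval x y := by
  obtain ⟨hBl, hBu⟩ := abs_le.1 hr.1
  have hAC := hr.2.1
  have hy1 : 1 ≤ y ^ 2 := by nlinarith [Int.one_le_abs hy, sq_abs y]
  rcases eq_or_ne x 0 with rfl | hx
  · simp only [eval]
    nlinarith
  have hx1 : 1 ≤ x ^ 2 := by nlinarith [Int.one_le_abs hx, sq_abs x]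
  simp only [eval]
  -- `2 Q(x,y) = |B| (x ± y)² + (2A - |B|) x² + (2C - |B|) y²`, with `x², y² ≥ 1`
  rcases le_or_gt 0 Q.B with hB | hB
  · nlinarith [mul_nonneg hB (sq_nonneg (x + y)),
      mul_nonneg (by linarith : (0:ℤ) ≤ 2 * Q.A - Q.B) (by linarith : (0:ℤ) ≤ x ^ 2 - 1),
      mul_nonneg (by linarith : (0:ℤ) ≤ 2 * Q.C - Q.B) (by linarith : (0:ℤ) ≤ y ^ 2 - 1)]
  · nlinarith [mul_nonneg (by linarith : (0:ℤ) ≤ -Q.B) (sq_nonneg (x - y)),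
      mul_nonneg (by linarith : (0:ℤ) ≤ 2 * Q.A + Q.B) (by linarith : (0:ℤ) ≤ x ^ 2 - 1),
      mul_nonneg (by linarith : (0:ℤ) ≤ 2 * Q.C + Q.B) (by linarith : (0:ℤ) ≤ y ^ 2 - 1)]

theorem Reduced.A_le_eval {Q : BQF} (hr : Q.Reduced) {x y : ℤ} (hxy : (x, y) ≠ 0) :
    Q.A ≤ Q.eval x y := by
  rcases eq_or_ne y 0 with rfl | hy
  · have hx : x ≠ 0 := fun hx => hxy (by simp [hx])
    have hA : 0 ≤ Q.A := (abs_nonneg _).trans hr.1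
    simpa [eval] using le_mul_of_one_le_right hA (by nlinarith [Int.one_le_abs hx, sq_abs x])
  · exact hr.2.1.trans (hr.C_le_eval hy)

theorem Reduced.A_le_act_A {Q : BQF} (hr : Q.Reduced) (γ : SL(2, ℤ)) : Q.A ≤ (Q.act γ).A :=
  hr.A_le_eval (fin_two_col_zero_ne_zero γ)

theorem Reduced.A_eq_C_of_act_A_le {Q : BQF} (hr : Q.Reduced) {γ : SL(2, ℤ)}
    (hγ : (Q.act γ).A ≤ Q.A) (hc : γ 1 0 ≠ 0) : Q.A = Q.C :=
  le_antisymm hr.2.1 ((hr.C_le_eval hc).trans hγ)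

theorem Reduced.eq_zero_of_B_eq {Q Q' : BQF} (hA : 0 < Q.A) (hr : Q.Reduced) (hr' : Q'.Reduced)
    (hAA : Q'.A = Q.A) {k : ℤ} (hk : Q'.B = Q.B + 2 * Q.A * k) : k = 0 := by
  obtain ⟨hBl, hBu⟩ := abs_le.1 hr.1
  obtain ⟨hB'l, hB'u⟩ := abs_le.1 hr'.1
  rcases lt_trichotomy k 0 with hk0 | hk0 | hk0
  · have hB' : Q'.B = -Q'.A := by nlinarith
    have := hr'.2.2 (Or.inl (by rw [hB', abs_neg, abs_of_pos (by linarith)]))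
    linarith
  · exact hk0
  · have hB : Q.B = -Q.A := by nlinarith
    have := hr.2.2 (Or.inl (by rw [hB, abs_neg, abs_of_pos hA]))
    linarith

theorem eq_of_A_eq_of_B_eq_of_disc_eq {Q Q' : BQF} (hA0 : Q.A ≠ 0) (hA : Q.A = Q'.A)
    (hB : Q.B = Q'.B) (hD : Q.disc = Q'.disc) : Q = Q' := by
  have hC : Q.C = Q'.C := by
    simp only [disc] at hD
    rw [hA, hB] at hD
    exact mul_left_cancel₀ (mul_ne_zero four_ne_zero (hA ▸ hA0)) (by linarith)
  cases Q; cases Q'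
  simp_all

theorem Reduced.act_eq {R : BQF} (hp : R.PosDef) (hr : R.Reduced) {γ : SL(2, ℤ)}
    (hr' : (R.act γ).Reduced) : R.act γ = R := by
  have hinv : (R.act γ).act γ⁻¹ = R := act_act_inv R γ
  have hAA : (R.act γ).A = R.A :=
    le_antisymm (by simpa only [hinv] using hr'.A_le_act_A γ⁻¹) (hr.A_le_act_A γ)
  refine (eq_of_A_eq_of_B_eq_of_disc_eq (hAA ▸ hp.1.ne') hAA.symm ?_ (disc_act R γ).symm).symm
  by_cases hc : γ 1 0 = 0
  · have hB : (R.act γ).B = R.B + 2 * R.A * (γ 0 0 * γ 0 1) := by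
      have hdet := fin_two_det_eq_one γ
      simp only [act, hc] at hdet ⊢
      linear_combination R.B * hdet
    rw [hB, hr.eq_zero_of_B_eq hp.1 hr' hAA hB]
    ring
  · have hC : R.A = R.C := hr.A_eq_C_of_act_A_le hAA.le hc
    have hC' : (R.act γ).A = (R.act γ).C :=
      hr'.A_eq_C_of_act_A_le (by rw [hinv, hAA])
        (by rw [fin_two_inv_one_zero]; exact neg_ne_zero.2 hc)
    have hsq : R.B ^ 2 = (R.act γ).B ^ 2 := by
      have hD := disc_act R γ
      simp only [disc] at hD
      rw [← hC, ← hC', hAA] at hD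
      linarith
    exact (pow_left_inj₀ (hr.2.2 (Or.inr hC)) (hr'.2.2 (Or.inr hC')) two_ne_zero).1 hsq

end BQF

/-- Let `D < 0` with `D ≡ 0` or `1 mod 4`.  Every positive definite integral binary quadratic
form of discriminant `D` is `SL₂(ℤ)`-equivalent to exactly one reduced form. -/
theorem statement9 :
    ∀ D : ℤ, D < 0 → (D % 4 = 0 ∨ D % 4 = 1) →
      ∀ Q : BQF, Q.PosDef → Q.disc = D →
        ∃! R : BQF, R.Reduced ∧ Q.Equivalent R := by
  intro D _ _ Q hQ _
  obtain ⟨γ, hγ⟩ := hQ.exists_act_reduced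
  refine ⟨Q.act γ, ⟨hγ, BQF.equivalent_iff.2 ⟨γ, rfl⟩⟩, ?_⟩
  rintro R ⟨hR, hQR⟩
  obtain ⟨δ, rfl⟩ := BQF.equivalent_iff.1 hQR
  have hδ : ((Q.act γ).act (γ⁻¹ * δ)) = Q.act δ := by rw [BQF.act_mul, BQF.act_act_inv]
  rw [← hδ] at hR ⊢
  exact hγ.act_eq (hQ.act γ) hR
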